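/- arXiv:2107.03805 — 4 statements merged into one kernel-verified Lean document; each statement's English description precedes it below -/
import Mathlib

section
/- (Recurrence for the Taylor coefficients of ψ.) Set u_0 = −(1/2)∫₀¹ log φ(t) dt and u_k = −∫₀¹ e^{−2πikt} log φ(t) dt for k ≥ 1. Then the Taylor coefficients a_n of the inverse Szegő function ψ satisfy a_0 = e^{u_0} and, for every n ≥ 0, a_{n+1} = (1/(n+1)) Σ_{k=0}^{n} (k+1) u_{k+1} a_{n−k}. -/
/-!
Expanding the Herglotz kernel `(ζ + z) / (ζ - z) = 1 + 2 ∑_{k ≥ 1} (z / ζ) ^ k` under the integral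
(dominated convergence, as `log φ` is integrable) shows that the exponent `E` in `ψ = exp ∘ E` has
Taylor coefficients `u k`. Then `ψ' = E' ψ`, and Leibniz' rule for the `n`-th derivative of `E' ψ`
at `0` is, after dividing by factorials, the recurrence.
-/

open MeasureTheory Complex Filter ComplexConjugate

/-- The point `e^{2πit}` on the unit circle. -/
noncomputable def circlePt (t : ℝ) : ℂ := Complex.exp (((2 * Real.pi * t : ℝ) : ℂ) * Complex.I)

/-- The inverse Szegő function `ψ(z) = exp(-(1/2)∫₀¹ ((e^{2πit}+z)/(e^{2πit}-z)) log φ(t) dt)`. -/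
noncomputable def szegoPsi (φ : ℝ → ℝ) (z : ℂ) : ℂ :=
  Complex.exp (-(1/2 : ℂ) * ∫ t in (0:ℝ)..1,
    ((circlePt t + z) / (circlePt t - z)) * (Real.log (φ t) : ℂ))

/-- Fourier coefficients of the weight: `γ(k) = ∫₀¹ e^{2πikt} φ(t) dt`. -/
noncomputable def toeplitzCoeff (φ : ℝ → ℝ) (k : ℤ) : ℂ :=
  ∫ t in (0:ℝ)..1, Complex.exp (((2 * Real.pi * (k : ℝ) * t : ℝ) : ℂ) * Complex.I) * (φ t : ℂ)

open FormalMultilinearSeries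
open scoped NNReal Topology

theorem hasFPowerSeriesOnBall_ofScalars_of_hasSum {𝕜 : Type*} [RCLike 𝕜] {f : 𝕜 → 𝕜}
    {c : ℕ → 𝕜} {r : ℝ≥0} (hr : 0 < r)
    (hf : ∀ z : 𝕜, ‖z‖ < r → HasSum (fun n => c n * z ^ n) (f z)) :
    HasFPowerSeriesOnBall f (ofScalars 𝕜 c) 0 r := by
  refine ⟨ENNReal.le_of_forall_nnreal_lt fun ρ hρ => ?_, by simpa using hr, fun {y} hy => ?_⟩
  · have hρ' : ‖((ρ : ℝ) : 𝕜)‖ < r := by simpa using hρ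
    refine (ofScalars 𝕜 c).le_radius_of_tendsto (l := 0) ?_
    simpa [ofScalars_norm] using (hf _ hρ').summable.tendsto_atTop_zero.norm
  · have hy' : ‖y‖ < r := by simpa using hy
    simpa [ofScalars_apply_eq, mul_comm] using hf y hy'

open scoped Nat in
theorem HasFPowerSeriesAt.ofScalars_eq_iteratedDeriv_div_factorial {𝕜 : Type*} [RCLike 𝕜]
    {f : 𝕜 → 𝕜} {c : ℕ → 𝕜} {x : 𝕜} (hf : HasFPowerSeriesAt f (ofScalars 𝕜 c) x) (n : ℕ) :
    c n = iteratedDeriv n f x / n ! :=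
  congrFun (ofScalars_series_injective _ _
    (hf.eq_formalMultilinearSeries hf.analyticAt.hasFPowerSeriesAt)) n

theorem iteratedDeriv_succ_cexp_comp {E : ℂ → ℂ} {x : ℂ} (hE : AnalyticAt ℂ E x) (n : ℕ) :
    iteratedDeriv (n + 1) (fun z => cexp (E z)) x = ∑ i ∈ Finset.range (n + 1),
      n.choose i * iteratedDeriv (i + 1) E x * iteratedDeriv (n - i) (fun z => cexp (E z)) x := by
  have hderiv : deriv (fun z => cexp (E z)) =ᶠ[𝓝 x] fun z => deriv E z * cexp (E z) := by
    filter_upwards [hE.eventually_analyticAt] with z hz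
    simp [hz.differentiableAt.hasDerivAt.cexp.deriv, mul_comm]
  rw [iteratedDeriv_succ', hderiv.iteratedDeriv_eq,
    iteratedDeriv_fun_mul hE.deriv.contDiffAt hE.cexp'.contDiffAt]
  simp only [iteratedDeriv_succ']

section CexpOfScalars

variable {E : ℂ → ℂ} {u a : ℕ → ℂ} {x : ℂ} (hE : HasFPowerSeriesAt E (ofScalars ℂ u) x)
  (hexp : HasFPowerSeriesAt (fun z => cexp (E z)) (ofScalars ℂ a) x)
include hE hexp

theorem HasFPowerSeriesAt.cexp_ofScalars_zero : a 0 = cexp (u 0) := by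
  simp [hE.ofScalars_eq_iteratedDeriv_div_factorial, hexp.ofScalars_eq_iteratedDeriv_div_factorial]

open scoped Nat in
theorem HasFPowerSeriesAt.cexp_ofScalars_succ (n : ℕ) :
    ((n : ℂ) + 1) * a (n + 1) =
      ∑ k ∈ Finset.range (n + 1), ((k : ℂ) + 1) * u (k + 1) * a (n - k) := by
  simp only [hE.ofScalars_eq_iteratedDeriv_div_factorial,
    hexp.ofScalars_eq_iteratedDeriv_div_factorial,
    iteratedDeriv_succ_cexp_comp hE.analyticAt, Nat.factorial_succ]
  rw [Finset.sum_div, Finset.mul_sum]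
  refine Finset.sum_congr rfl fun k hk => ?_
  have hkn : k ≤ n := Finset.mem_range_succ_iff.mp hk
  have hchoose : (n.choose k : ℂ) * k ! * (n - k)! = n ! := by
    exact_mod_cast Nat.choose_mul_factorial_mul_factorial hkn
  have hchoose_ne : (n.choose k : ℂ) ≠ 0 := by exact_mod_cast (Nat.choose_pos hkn).ne'
  push_cast
  rw [← hchoose]
  field_simp

end CexpOfScalars

theorem hasSum_herglotz_kernel {ζ z : ℂ} (hz : ‖z‖ < ‖ζ‖) :
    HasSum (fun k : ℕ => (if k = 0 then 1 else 2) * (z / ζ) ^ k) ((ζ + z) / (ζ - z)) := by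
  have hζ : ζ ≠ 0 := norm_pos_iff.mp ((norm_nonneg z).trans_lt hz)
  have hw : ‖z / ζ‖ < 1 := by rwa [norm_div, div_lt_one (norm_pos_iff.mpr hζ)]
  have hsub : ζ - z ≠ 0 := fun h => hz.ne (by rw [sub_eq_zero.mp h])
  have hterm : (fun k : ℕ => (if k = 0 then 1 else 2) * (z / ζ) ^ k)
      = fun k => 2 * (z / ζ) ^ k - if k = 0 then 1 else 0 := by
    funext k
    split_ifs <;> simp_all
    ring
  rw [hterm, show (ζ + z) / (ζ - z) = 2 * (1 - z / ζ)⁻¹ - 1 by field_simp; ring]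
  exact ((hasSum_geometric_of_norm_lt_one hw).mul_left 2).sub (hasSum_ite_eq 0 (1 : ℂ))

theorem norm_circlePt (t : ℝ) : ‖circlePt t‖ = 1 := by
  simp [circlePt, Complex.norm_exp]

theorem circlePt_ne_zero (t : ℝ) : circlePt t ≠ 0 := Complex.exp_ne_zero _

theorem continuous_circlePt : Continuous circlePt := by
  unfold circlePt; fun_prop

theorem circlePt_inv_pow (t : ℝ) (k : ℕ) :
    (circlePt t)⁻¹ ^ k = cexp (-(((2 * Real.pi * (k : ℝ) * t : ℝ) : ℂ) * I)) := by
  rw [circlePt, ← Complex.exp_neg, ← Complex.exp_nat_mul]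
  push_cast
  ring_nf

theorem hasSum_integral_herglotz_kernel_mul {L : ℝ → ℂ} (hL : IntervalIntegrable L volume 0 1)
    {z : ℂ} (hz : ‖z‖ < 1) :
    HasSum (fun k : ℕ => ∫ t in (0:ℝ)..1, (if k = 0 then 1 else 2) * (z / circlePt t) ^ k * L t)
      (∫ t in (0:ℝ)..1, (circlePt t + z) / (circlePt t - z) * L t) := by
  have hz' : ∀ t, ‖z‖ < ‖circlePt t‖ := by simpa [norm_circlePt] using hz
  refine intervalIntegral.hasSum_integral_of_dominated_convergence
    (fun k t => 2 * ‖z‖ ^ k * ‖L t‖) (fun k => ?_) (fun k => .of_forall fun t _ => ?_)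
    (.of_forall fun t _ => ?_) ?_
    (.of_forall fun t _ => (hasSum_herglotz_kernel (hz' t)).mul_right _)
  · exact (continuous_const.mul ((continuous_const.div continuous_circlePt circlePt_ne_zero).pow
      k)).aestronglyMeasurable.mul hL.def'.aestronglyMeasurable
  · rw [norm_mul, norm_mul, norm_pow, norm_div, norm_circlePt, div_one]
    gcongr
    split_ifs <;> norm_num
  · exact ((summable_geometric_of_lt_one (norm_nonneg z) hz).mul_left 2).mul_right _
  · simp_rw [tsum_mul_right]
    exact hL.norm.const_mul _

theorem hasSum_szegoPsi_exponent (φ : ℝ → ℝ) (u : ℕ → ℂ)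
    (hSzego : IntervalIntegrable (fun t => Real.log (φ t)) volume 0 1)
    (hu0 : u 0 = -(1/2 : ℂ) * ((∫ t in (0:ℝ)..1, Real.log (φ t) : ℝ) : ℂ))
    (huk : ∀ k : ℕ, 1 ≤ k →
      u k = -∫ t in (0:ℝ)..1,
        Complex.exp (-(((2 * Real.pi * (k : ℝ) * t : ℝ) : ℂ) * Complex.I)) *
          (Real.log (φ t) : ℂ))
    {z : ℂ} (hz : ‖z‖ < 1) :
    HasSum (fun k : ℕ => u k * z ^ k)
      (-(1/2 : ℂ) * ∫ t in (0:ℝ)..1,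
        ((circlePt t + z) / (circlePt t - z)) * (Real.log (φ t) : ℂ)) := by
  have hterm : ∀ k : ℕ, -(1/2 : ℂ) * ∫ t in (0:ℝ)..1,
      (if k = 0 then 1 else 2) * (z / circlePt t) ^ k * (Real.log (φ t) : ℂ) = u k * z ^ k := by
    rintro (_ | k)
    · simp [hu0, intervalIntegral.integral_ofReal]
    · simp only [huk (k + 1) k.succ_pos, div_eq_mul_inv, mul_pow, circlePt_inv_pow,
        if_neg k.succ_ne_zero, mul_assoc, intervalIntegral.integral_const_mul]
      ring
  rw [← funext hterm]
  have hlog : IntervalIntegrable (fun t => (Real.log (φ t) : ℂ)) volume 0 1 :=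
    intervalIntegrable_iff.2 hSzego.def'.ofReal
  exact (hasSum_integral_herglotz_kernel_mul hlog hz).mul_left _

theorem taylor_coeff_recurrence_general
    (φ : ℝ → ℝ) (a : ℕ → ℂ) (u : ℕ → ℂ)
    (hSzego : IntervalIntegrable (fun t => Real.log (φ t)) volume 0 1)
    -- a_n are the Taylor coefficients of the inverse Szegő function ψ
    (ha : ∀ z : ℂ, ‖z‖ < 1 → HasSum (fun n : ℕ => a n * z ^ n) (szegoPsi φ z))
    -- the coefficients u_k
    (hu0 : u 0 = -(1/2 : ℂ) * ((∫ t in (0:ℝ)..1, Real.log (φ t) : ℝ) : ℂ))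
    (huk : ∀ k : ℕ, 1 ≤ k →
      u k = -∫ t in (0:ℝ)..1,
        Complex.exp (-(((2 * Real.pi * (k : ℝ) * t : ℝ) : ℂ) * Complex.I)) *
          (Real.log (φ t) : ℂ)) :
    a 0 = Complex.exp (u 0) ∧
    ∀ n : ℕ, a (n + 1) =
      (1 / ((n : ℂ) + 1)) *
        ∑ k ∈ Finset.range (n + 1), ((k : ℂ) + 1) * u (k + 1) * a (n - k) := by
  have hE := hasFPowerSeriesOnBall_ofScalars_of_hasSum one_pos fun z hz =>
    hasSum_szegoPsi_exponent φ u hSzego hu0 huk (by simpa using hz)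
  have hψ := hasFPowerSeriesOnBall_ofScalars_of_hasSum one_pos fun z hz =>
    ha z (by simpa using hz)
  -- `szegoPsi φ` is by definition `fun z => cexp (E z)` for the function `E` of `hE`.
  refine ⟨hE.hasFPowerSeriesAt.cexp_ofScalars_zero hψ.hasFPowerSeriesAt, fun n => ?_⟩
  rw [← hE.hasFPowerSeriesAt.cexp_ofScalars_succ hψ.hasFPowerSeriesAt n]
  field_simp

/-- recurrence for the Taylor coefficients of ψ: with
`u_0 = −(1/2)∫₀¹ log φ` and `u_k = −∫₀¹ e^{−2πikt} log φ(t) dt` (k ≥ 1), one has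
`a_0 = e^{u_0}` and `a_{n+1} = (1/(n+1)) Σ_{k=0}^{n} (k+1) u_{k+1} a_{n−k}`. -/
theorem taylor_coeff_recurrence
    (φ : ℝ → ℝ) (a : ℕ → ℂ) (u : ℕ → ℂ)
    (hφmeas : Measurable φ)
    (hφnonneg : ∀ t ∈ Set.Icc (0:ℝ) 1, 0 ≤ φ t)
    (hφprob : ∫ t in (0:ℝ)..1, φ t = 1)
    (hφp : ∃ p : ℝ, 1 < p ∧ IntervalIntegrable (fun t => φ t ^ p) volume 0 1)
    (hSzego : IntervalIntegrable (fun t => Real.log (φ t)) volume 0 1)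
    -- a_n are the Taylor coefficients of the inverse Szegő function ψ
    (ha : ∀ z : ℂ, ‖z‖ < 1 → HasSum (fun n : ℕ => a n * z ^ n) (szegoPsi φ z))
    -- the coefficients u_k
    (hu0 : u 0 = -(1/2 : ℂ) * ((∫ t in (0:ℝ)..1, Real.log (φ t) : ℝ) : ℂ))
    (huk : ∀ k : ℕ, 1 ≤ k →
      u k = -∫ t in (0:ℝ)..1,
        Complex.exp (-(((2 * Real.pi * (k : ℝ) * t : ℝ) : ℂ) * Complex.I)) *
          (Real.log (φ t) : ℂ)) :
    a 0 = Complex.exp (u 0) ∧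
    ∀ n : ℕ, a (n + 1) =
      (1 / ((n : ℂ) + 1)) *
        ∑ k ∈ Finset.range (n + 1), ((k : ℂ) + 1) * u (k + 1) * a (n - k) :=
  taylor_coeff_recurrence_general φ a u hSzego ha hu0 huk
end

section
/- For every q ∈ ℂ with |q| < 1/2, one has the closed-form integral evaluation ∫₀¹ log(1 + 2 Re(q e^{2πit})) dt = log((1 + sqrt(1 − 4|q|²))/2). -/
open MeasureTheory Complex Filter ComplexConjugate

/-!
On the unit circle, with `s = √(1 - 4‖q‖²)` and `a = 2q / (1 + s)`, one has the factorization
`1 + 2 Re(q w) = (1 + s)/2 · ‖1 + a w‖²`. Since `‖a‖ < 1`, the function `log ‖1 + a z‖` is harmonic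
on a neighbourhood of the closed unit disc, so its mean over the circle is its value `log 1 = 0`
at the centre.
-/

open Real (circleAverage)

theorem circlePt_eq_circleMap (t : ℝ) : circlePt t = circleMap 0 1 (2 * Real.pi * t) := by
  simp [circlePt, circleMap]

theorem integral_comp_circlePt {E : Type*} [NormedAddCommGroup E] [NormedSpace ℝ E]
    (f : ℂ → E) : ∫ t in (0:ℝ)..1, f (circlePt t) = circleAverage f 0 1 := by
  have h := intervalIntegral.smul_integral_comp_mul_left (fun θ ↦ f (circleMap 0 1 θ))
    (2 * Real.pi) (a := 0) (b := 1)
  rw [mul_zero, mul_one] at h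
  rw [Real.circleAverage_def, ← h, inv_smul_smul₀ (by positivity)]
  simp only [circlePt_eq_circleMap]

theorem one_add_mul_ne_zero {a z : ℂ} (ha : ‖a‖ < 1) (hz : ‖z‖ ≤ 1) : 1 + a * z ≠ 0 := by
  intro h
  have : ‖a * z‖ < 1 := by rw [norm_mul]; nlinarith [norm_nonneg a, norm_nonneg z]
  rw [eq_neg_of_add_eq_zero_right h, norm_neg, norm_one] at this
  exact lt_irrefl _ this

theorem circleAverage_log_norm_one_add_mul {a : ℂ} (ha : ‖a‖ < 1) :
    circleAverage (fun z ↦ Real.log ‖1 + a * z‖) 0 1 = 0 := by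
  rw [AnalyticOnNhd.circleAverage_log_norm_of_ne_zero (fun z _ ↦ by fun_prop)
    (fun z hz ↦ one_add_mul_ne_zero ha (by simpa using hz))]
  simp

theorem norm_one_add_mul_sq {b w : ℂ} (hw : ‖w‖ = 1) :
    ‖1 + b * w‖ ^ 2 = 1 + ‖b‖ ^ 2 + 2 * (b * w).re := by
  simp only [Complex.sq_norm, Complex.normSq_add, map_one, Complex.normSq_mul,
    Complex.normSq_eq_norm_sq w, hw, one_mul, Complex.conj_re]
  ring

theorem one_add_two_re_mul_eq_mul_norm_sq {q w : ℂ} {s : ℝ} (hs : 0 ≤ s) (hs2 : s ^ 2 = 1 - 4 * ‖q‖ ^ 2)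
    (hw : ‖w‖ = 1) :
    1 + 2 * (q * w).re = (1 + s) / 2 * ‖1 + ((2 / (1 + s) : ℝ) : ℂ) * q * w‖ ^ 2 := by
  rw [norm_one_add_mul_sq hw, norm_mul, Complex.norm_real, Real.norm_of_nonneg (by positivity),
    mul_assoc, Complex.re_ofReal_mul]
  field_simp
  linear_combination -hs2

/-- for |q| < 1/2,
`∫₀¹ log(1 + 2 Re(q e^{2πit})) dt = log((1 + sqrt(1 − 4|q|²))/2)`. -/
theorem log_integral_tridiagonal (q : ℂ) (hq : ‖q‖ < 1/2) :
    ∫ t in (0:ℝ)..1, Real.log (1 + 2 * (q * circlePt t).re) =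
      Real.log ((1 + Real.sqrt (1 - 4 * ‖q‖ ^ 2)) / 2) := by
  set s := √(1 - 4 * ‖q‖ ^ 2)
  have hs : 0 ≤ s := Real.sqrt_nonneg _
  have hs2 : s ^ 2 = 1 - 4 * ‖q‖ ^ 2 := Real.sq_sqrt (by nlinarith [norm_nonneg q])
  set a : ℂ := ((2 / (1 + s) : ℝ) : ℂ) * q
  have ha : ‖a‖ < 1 := by
    rw [norm_mul, Complex.norm_real, Real.norm_of_nonneg (by positivity), div_mul_eq_mul_div,
      div_lt_one (by positivity)]
    linarith
  have hlog : Set.EqOn (fun z ↦ Real.log (1 + 2 * (q * z).re))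
      (fun z ↦ Real.log ((1 + s) / 2) + (2 : ℝ) • Real.log ‖1 + a * z‖) (Metric.sphere 0 |1|) := by
    intro z hz
    have hz : ‖z‖ = 1 := by simpa using hz
    have hne : ‖1 + a * z‖ ≠ 0 := norm_ne_zero_iff.2 (one_add_mul_ne_zero ha hz.le)
    dsimp only
    rw [one_add_two_re_mul_eq_mul_norm_sq hs hs2 hz, Real.log_mul (by positivity) (by positivity),
      Real.log_pow, Nat.cast_ofNat, smul_eq_mul]
  have hint : CircleIntegrable (fun z ↦ (2 : ℝ) • Real.log ‖1 + a * z‖) 0 1 :=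
    (MeromorphicOn.circleIntegrable_log_norm (f := fun z ↦ 1 + a * z) (c := 0) (R := 1)
      (fun z _ ↦ by fun_prop)).smul (2 : ℝ)
  rw [integral_comp_circlePt (fun z ↦ Real.log (1 + 2 * (q * z).re)),
    Real.circleAverage_congr_sphere hlog,
    Real.circleAverage_fun_add (circleIntegrable_const _ _ _) hint,
    Real.circleAverage_const, Real.circleAverage_fun_smul, circleAverage_log_norm_one_add_mul ha,
    smul_zero, add_zero]
end

section
/- (Explicit inverse of the infinite tridiagonal hermitian Toeplitz matrix.) Let q ∈ ℂ with |q| < 1/2 and set c₀ = sqrt((1 + sqrt(1 − 4|q|²))/2). Let G be the infinite matrix with rows and columns indexed by positive integers defined by G_{k,j} = 1 if k = j, G_{k,j} = q if j − k = 1, G_{k,j} = conj(q) if j − k = −1, and G_{k,j} = 0 otherwise. Define B_{k,j} = (−1)^{j+k} c₀^{2(1−k−j)} conj(q)^{k−j} (c₀^{4j} − |q|^{2j}) / (c₀⁴ − |q|²) for j ≤ k, and B_{k,j} = conj(B_{j,k}) for j > k. Then B is the inverse of G: Σ_{m≥1} G_{k,m} B_{m,j} = δ_{k,j} and Σ_{m≥1}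 B_{k,m} G_{m,j} = δ_{k,j} for all k, j ≥ 1 (each sum has at most three nonzero terms in the first case, and is absolutely convergent in the second). -/
/-!
Let `β = -conj q / c₀²`, a root of `q z² + z + conj q = 0` (because `C = c₀²` solves
`C² = C - |q|²`). The bi-infinite tridiagonal Toeplitz matrix is inverted by the kernel equal to
`β ^ (k - j)` below and `conj β ^ (j - k)` above the diagonal, up to the factor
`(1 + q β + conj (q β))⁻¹`: off the diagonal every row of `G` annihilates a geometric sequence
with ratio `β` or `conj β`. Subtracting the rank-one matrix `β ^ k * conj β ^ j`, which is also
annihilated by every row, makes the kernel vanish in row `0`, so the first row of the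
semi-infinite matrix, which lacks its `conj q` entry, behaves like every other row. Unwinding the
powers of `c₀` shows that `B` is this kernel; the second identity is the conjugate of the first,
both matrices being hermitian.
-/

open MeasureTheory Complex Filter ComplexConjugate

def tridiag (q : ℂ) (k j : ℕ) : ℂ :=
  if k = j then 1 else if j = k + 1 then q else if k = j + 1 then conj q else 0

def laurentInv (β : ℂ) (k j : ℕ) : ℂ :=
  if j ≤ k then β ^ (k - j) else conj β ^ (j - k)

noncomputable def toeplitzInv (q β : ℂ) (k j : ℕ) : ℂ :=
  (1 + q * β + conj q * conj β)⁻¹ * (laurentInv β k j - β ^ k * conj β ^ j)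

section Inverse

variable {q β : ℂ}

lemma laurentInv_row (hβ : conj q + β + q * β ^ 2 = 0) (k j : ℕ) :
    conj q * laurentInv β k j + laurentInv β (k + 1) j + q * laurentInv β (k + 2) j =
      if k + 1 = j then 1 + q * β + conj q * conj β else 0 := by
  have hβ' : q + conj β + conj q * conj β ^ 2 = 0 := by simpa using congrArg conj hβ
  rcases lt_trichotomy j (k + 1) with h | rfl | h
  · obtain ⟨d, rfl⟩ := Nat.exists_eq_add_of_le (Nat.lt_succ_iff.mp h)
    simp only [laurentInv, if_pos (by omega : j ≤ j + d), if_pos (by omega : j ≤ j + d + 1),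
      if_pos (by omega : j ≤ j + d + 2), if_neg (by omega : j + d + 1 ≠ j)]
    rw [show j + d + 1 - j = d + 1 by omega, show j + d + 2 - j = d + 2 by omega,
      Nat.add_sub_cancel_left]
    linear_combination β ^ d * hβ
  · simp [laurentInv]
    ring
  · obtain ⟨d, rfl⟩ := Nat.exists_eq_add_of_lt h
    simp only [laurentInv, if_neg (by omega : ¬ k + 1 + d + 1 ≤ k),
      if_neg (by omega : ¬ k + 1 + d + 1 ≤ k + 1), if_neg (by omega : k + 1 ≠ k + 1 + d + 1)]
    rcases d with _ | d
    · simp only [if_pos (by omega : k + 1 + 0 + 1 ≤ k + 2)]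
      rw [show k + 1 + 0 + 1 - k = 2 by omega, show k + 1 + 0 + 1 - (k + 1) = 1 by omega,
        show k + 2 - (k + 1 + 0 + 1) = 0 by omega]
      linear_combination hβ'
    · simp only [if_neg (by omega : ¬ k + 1 + (d + 1) + 1 ≤ k + 2)]
      rw [show k + 1 + (d + 1) + 1 - k = d + 3 by omega,
        show k + 1 + (d + 1) + 1 - (k + 1) = d + 2 by omega,
        show k + 1 + (d + 1) + 1 - (k + 2) = d + 1 by omega]
      linear_combination conj β ^ (d + 1) * hβ'

lemma toeplitzInv_row (hβ : conj q + β + q * β ^ 2 = 0)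
    (hβq : 1 + q * β + conj q * conj β ≠ 0) (k j : ℕ) :
    conj q * toeplitzInv q β k j + toeplitzInv q β (k + 1) j + q * toeplitzInv q β (k + 2) j =
      if k + 1 = j then 1 else 0 := by
  have hgeom : conj q * β ^ k + β ^ (k + 1) + q * β ^ (k + 2) = 0 := by
    linear_combination β ^ k * hβ
  have hrow := laurentInv_row hβ k j
  unfold toeplitzInv
  split_ifs at hrow ⊢
  · field_simp
    linear_combination hrow - conj β ^ j * hgeom
  · linear_combination (1 + q * β + conj q * conj β)⁻¹ * (hrow - conj β ^ j * hgeom)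

lemma toeplitzInv_zero_left (j : ℕ) : toeplitzInv q β 0 j = 0 := by
  rcases j with _ | j <;> simp [toeplitzInv, laurentInv]

lemma conj_toeplitzInv (k j : ℕ) : conj (toeplitzInv q β k j) = toeplitzInv q β j k := by
  have hlaurent : conj (laurentInv β k j) = laurentInv β j k := by
    unfold laurentInv
    rcases lt_trichotomy k j with h | rfl | h
    · simp [h.not_ge, h.le]
    · simp
    · simp [h.not_ge, h.le]
  simp only [toeplitzInv, map_mul, map_inv₀, map_add, map_sub, map_pow, map_one, conj_conj,
    hlaurent]
  ring

lemma conj_tridiag (k j : ℕ) : conj (tridiag q k j) = tridiag q j k := by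
  unfold tridiag
  split_ifs <;> first | omega | simp

lemma hasSum_tridiag_mul {x : ℕ → ℂ} (hx : x 0 = 0) (k : ℕ) :
    HasSum (fun m => tridiag q (k + 1) (m + 1) * x (m + 1))
      (conj q * x k + x (k + 1) + q * x (k + 2)) := by
  have hsupp : ∀ m ∉ ({k, k + 1, k + 2} : Finset ℕ), tridiag q (k + 1) m * x m = 0 := by
    intro m hm
    simp only [Finset.mem_insert, Finset.mem_singleton, not_or] at hm
    simp only [tridiag]
    split_ifs <;> first | omega | simp
  have hsum := (hasSum_nat_add_iff' 1).mpr (hasSum_sum_of_ne_finset_zero hsupp)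
  have hvalue : ∑ m ∈ {k, k + 1, k + 2}, tridiag q (k + 1) m * x m
      - ∑ m ∈ Finset.range 1, tridiag q (k + 1) m * x m
      = conj q * x k + x (k + 1) + q * x (k + 2) := by
    simp [tridiag, hx, add_assoc]
  rwa [hvalue] at hsum

theorem hasSum_tridiag_mul_toeplitzInv (hβ : conj q + β + q * β ^ 2 = 0)
    (hβq : 1 + q * β + conj q * conj β ≠ 0) (k j : ℕ) :
    HasSum (fun m => tridiag q (k + 1) (m + 1) * toeplitzInv q β (m + 1) j)
      (if k + 1 = j then 1 else 0) := by
  rw [← toeplitzInv_row hβ hβq k j]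
  exact hasSum_tridiag_mul (x := fun m => toeplitzInv q β m j) (toeplitzInv_zero_left j) k

theorem hasSum_toeplitzInv_mul_tridiag (hβ : conj q + β + q * β ^ 2 = 0)
    (hβq : 1 + q * β + conj q * conj β ≠ 0) (k j : ℕ) :
    HasSum (fun m => toeplitzInv q β k (m + 1) * tridiag q (m + 1) (j + 1))
      (if k = j + 1 then 1 else 0) := by
  have hterm : (fun m => toeplitzInv q β k (m + 1) * tridiag q (m + 1) (j + 1)) =
      fun m => conj (tridiag q (j + 1) (m + 1) * toeplitzInv q β (m + 1) k) := by
    ext m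
    rw [map_mul, conj_toeplitzInv, conj_tridiag, mul_comm]
  have hvalue : (if k = j + 1 then 1 else 0 : ℂ) = conj (if j + 1 = k then 1 else 0) := by
    split_ifs <;> first | omega | simp
  rw [hterm, hvalue, Complex.hasSum_conj']
  exact hasSum_tridiag_mul_toeplitzInv hβ hβq j k

end Inverse

lemma sq_sq_eq_sq_sub_sq_of_eq_sqrt {a c : ℝ} (ha : 4 * a ^ 2 ≤ 1)
    (hc : c = √((1 + √(1 - 4 * a ^ 2)) / 2)) : (c ^ 2) ^ 2 = c ^ 2 - a ^ 2 := by
  have hs := Real.sq_sqrt (sub_nonneg.mpr ha)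
  rw [hc, Real.sq_sqrt (by positivity)]
  linear_combination hs / 4

lemma two_mul_sq_lt_sq_of_eq_sqrt {a c : ℝ} (ha : 4 * a ^ 2 < 1)
    (hc : c = √((1 + √(1 - 4 * a ^ 2)) / 2)) : 2 * a ^ 2 < c ^ 2 := by
  have hs := Real.sq_sqrt (sub_nonneg.mpr ha.le)
  have hpos : 0 < √(1 - 4 * a ^ 2) := Real.sqrt_pos.mpr (by linarith)
  rw [hc, Real.sq_sqrt (by positivity)]
  nlinarith

section Explicit

variable {q : ℂ} {c : ℝ}

lemma conj_add_neg_conj_div_sq_add_mul_sq_eq_zero (hc : (c ^ 2) ^ 2 = c ^ 2 - ‖q‖ ^ 2)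
    (hc0 : c ≠ 0) :
    conj q + -conj q / (c : ℂ) ^ 2 + q * (-conj q / (c : ℂ) ^ 2) ^ 2 = 0 := by
  have hcC : (c : ℂ) ≠ 0 := by exact_mod_cast hc0
  have hc' : ((c : ℂ) ^ 2) ^ 2 = (c : ℂ) ^ 2 - q * conj q := by
    rw [mul_conj']; exact_mod_cast hc
  field_simp
  linear_combination conj q * hc'

lemma one_add_mul_neg_conj_div_sq (hc0 : c ≠ 0) :
    1 + q * (-conj q / (c : ℂ) ^ 2) + conj q * conj (-conj q / (c : ℂ) ^ 2) =
      ((c : ℂ) ^ 2 - 2 * (q * conj q)) / (c : ℂ) ^ 2 := by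
  have hcC : (c : ℂ) ≠ 0 := by exact_mod_cast hc0
  simp only [map_div₀, map_neg, map_pow, conj_conj, conj_ofReal]
  field_simp
  ring

lemma one_add_mul_neg_conj_div_sq_ne_zero (hcq : 2 * ‖q‖ ^ 2 < c ^ 2) :
    1 + q * (-conj q / (c : ℂ) ^ 2) + conj q * conj (-conj q / (c : ℂ) ^ 2) ≠ 0 := by
  have hc0 : c ≠ 0 := by rintro rfl; nlinarith [norm_nonneg q]
  rw [one_add_mul_neg_conj_div_sq hc0, mul_conj']
  exact div_ne_zero (by exact_mod_cast (by linarith : c ^ 2 - 2 * ‖q‖ ^ 2 ≠ 0))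
    (by exact_mod_cast pow_ne_zero 2 hc0)

lemma toeplitzInv_eq_of_le (hc : (c ^ 2) ^ 2 = c ^ 2 - ‖q‖ ^ 2) (hc0 : c ≠ 0)
    (hcq : 2 * ‖q‖ ^ 2 < c ^ 2) {k j : ℕ} (h : j ≤ k) :
    toeplitzInv q (-conj q / (c : ℂ) ^ 2) k j =
      (-1 : ℂ) ^ (j + k) * (c : ℂ) ^ (2 * (1 - (k : ℤ) - (j : ℤ))) *
        (conj q) ^ (k - j) * ((c : ℂ) ^ (4 * j) - (‖q‖ : ℂ) ^ (2 * j)) /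
          ((c : ℂ) ^ 4 - (‖q‖ : ℂ) ^ 2) := by
  obtain ⟨d, rfl⟩ := Nat.exists_eq_add_of_le h
  have hcC : (c : ℂ) ≠ 0 := by exact_mod_cast hc0
  have hden : (c : ℂ) ^ 4 - (‖q‖ : ℂ) ^ 2 = (c : ℂ) ^ 2 - 2 * (q * conj q) := by
    rw [mul_conj']
    exact_mod_cast (by linear_combination hc : c ^ 4 - ‖q‖ ^ 2 = c ^ 2 - 2 * ‖q‖ ^ 2)
  have hden0 : (c : ℂ) ^ 2 - 2 * (q * conj q) ≠ 0 := by
    rw [mul_conj']; exact_mod_cast (by linarith : c ^ 2 - 2 * ‖q‖ ^ 2 ≠ 0)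
  have hzpow : (c : ℂ) ^ (2 * (1 - ((j + d : ℕ) : ℤ) - (j : ℤ))) =
      (c : ℂ) ^ 2 / (c : ℂ) ^ (2 * (2 * j + d)) := by
    rw [← zpow_natCast, ← zpow_natCast, ← zpow_sub₀ hcC]; push_cast; ring_nf
  have hsign : (-1 : ℂ) ^ (j + (j + d)) = (-1) ^ d := by
    rw [show j + (j + d) = 2 * j + d by ring, pow_add, pow_mul]; simp
  have hnorm : (‖q‖ : ℂ) ^ (2 * j) = (q * conj q) ^ j := by rw [pow_mul, mul_conj']
  have hsq : (-conj q) ^ j * (-q) ^ j = (q * conj q) ^ j := by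
    rw [← mul_pow, neg_mul_neg, mul_comm]
  rw [hzpow, hsign, hden, hnorm, Nat.add_sub_cancel_left, pow_mul,
    show 4 * j = 2 * (2 * j) by ring, pow_mul]
  unfold toeplitzInv
  rw [one_add_mul_neg_conj_div_sq hc0]
  simp only [laurentInv, if_pos h, map_div₀, map_neg, map_pow, conj_conj, conj_ofReal,
    Nat.add_sub_cancel_left]
  have hC : (c : ℂ) ^ 2 ≠ 0 := pow_ne_zero 2 hcC
  generalize (c : ℂ) ^ 2 = C at hC hden0 ⊢
  simp only [div_pow, pow_add, pow_mul]
  field_simp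
  rw [hsq, neg_pow (conj q)]
  ring

end Explicit

/-- explicit inverse of the infinite tridiagonal hermitian Toeplitz matrix:
for |q| < 1/2, the matrix B with entries
`B_{k,j} = (−1)^{j+k} c₀^{2(1−k−j)} conj(q)^{k−j} (c₀^{4j} − |q|^{2j})/(c₀⁴ − |q|²)` (j ≤ k),
`B_{k,j} = conj(B_{j,k})` (j > k), is a two-sided inverse of the tridiagonal Toeplitz
matrix G with 1 on the diagonal and q, conj(q) on the first super/sub-diagonals. -/
theorem tridiagonal_toeplitz_inverse (q : ℂ) (hq : ‖q‖ < 1/2)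
    (c₀ : ℝ) (hc₀ : c₀ = Real.sqrt ((1 + Real.sqrt (1 - 4 * ‖q‖ ^ 2)) / 2))
    (G B : ℕ → ℕ → ℂ)
    (hG : ∀ k j : ℕ, G k j =
      if k = j then 1 else if j = k + 1 then q else if k = j + 1 then conj q else 0)
    (hB : ∀ k j : ℕ, 1 ≤ j → j ≤ k →
      B k j = (-1 : ℂ) ^ (j + k) * (c₀ : ℂ) ^ (2 * (1 - (k : ℤ) - (j : ℤ))) *
        (conj q) ^ (k - j) * ((c₀ : ℂ) ^ (4 * j) - (‖q‖ : ℂ) ^ (2 * j)) /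
          ((c₀ : ℂ) ^ 4 - (‖q‖ : ℂ) ^ 2))
    (hBsym : ∀ k j : ℕ, 1 ≤ k → k < j → B k j = conj (B j k)) :
    ∀ k j : ℕ, 1 ≤ k → 1 ≤ j →
      HasSum (fun m : ℕ => G k (m + 1) * B (m + 1) j) (if k = j then 1 else 0) ∧
      HasSum (fun m : ℕ => B k (m + 1) * G (m + 1) j) (if k = j then 1 else 0) := by
  have hq2 : 4 * ‖q‖ ^ 2 < 1 := by nlinarith [norm_nonneg q]
  have hc := sq_sq_eq_sq_sub_sq_of_eq_sqrt hq2.le hc₀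
  have hcq := two_mul_sq_lt_sq_of_eq_sqrt hq2 hc₀
  have hc0 : c₀ ≠ 0 := by rintro rfl; nlinarith [norm_nonneg q]
  have hβ := conj_add_neg_conj_div_sq_add_mul_sq_eq_zero hc hc0
  have hβq := one_add_mul_neg_conj_div_sq_ne_zero hcq
  have hBeq : ∀ k j, 1 ≤ k → 1 ≤ j →
      B k j = toeplitzInv q (-conj q / (c₀ : ℂ) ^ 2) k j := by
    intro k j hk hj
    rcases le_or_gt j k with h | h
    · rw [hB k j hj h, toeplitzInv_eq_of_le hc hc0 hcq h]
    · rw [hBsym k j hk h, hB j k hk h.le, ← toeplitzInv_eq_of_le hc hc0 hcq h.le,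
        conj_toeplitzInv]
  obtain rfl : G = tridiag q := funext fun k => funext (hG k)
  intro k j hk hj
  obtain ⟨k, rfl⟩ := Nat.exists_eq_add_of_le' hk
  obtain ⟨j, rfl⟩ := Nat.exists_eq_add_of_le' hj
  constructor
  · simp_rw [hBeq _ (j + 1) (Nat.le_add_left 1 _) hj]
    exact hasSum_tridiag_mul_toeplitzInv hβ hβq k (j + 1)
  · simp_rw [hBeq (k + 1) _ hk (Nat.le_add_left 1 _)]
    exact hasSum_toeplitzInv_mul_tridiag hβ hβq (k + 1) j
end

section
/- (Szegő condition for fractional Gaussian noise.) For every H ∈ (0,1), the spectral density φ_H(t) = 4 C(H) sin²(πt) (ζ(2H+1, t) + ζ(2H+1, 1−t)), with C(H) = −ζ(−2H)/(2ζ(1+2H)), satisfies φ_H(t) > 0 for all t ∈ (0,1) and ∫₀¹ |log φ_H(t)| dt < ∞; in particular ∫₀¹ log φ_H(t) dt > −∞, so the Szegő function of φ_H is well defined. -/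
open MeasureTheory Complex Filter ComplexConjugate

/-- Hurwitz zeta function `ζ(s, x) = Σ_{n=0}^∞ (n + x)^{−s}` (convergent for s > 1, x ∈ (0,1]). -/
noncomputable def hurwitzZetaSum (s x : ℝ) : ℝ := ∑' n : ℕ, ((n : ℝ) + x) ^ (-s)

/-
By the functional equation, `C = -(2π)^{-s} Γ(s) cos(πs/2)` with `s = 2H + 1 ∈ (1, 3)`, so `C > 0`.
On `(0, 1)`, Jordan's inequality gives `t(1-t) ≤ sin(πt)`, and comparing the Hurwitz series with its
first term and with `ζ(s)` gives `1 ≤ ζ(s,t) + ζ(s,1-t) ≤ (2 + 2ζ(s)) (t(1-t))^{-s}`. Thus `φ_H` is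
squeezed between two positive multiples of powers of `t(1-t)`, so `log φ_H` lies between two affine
functions of `log t + log(1-t)`, which is integrable on `(0, 1)`.
-/

open Real Set

section HurwitzZetaSum

variable {s x : ℝ}

lemma summable_nat_add_rpow_neg (hs : 1 < s) (hx : 0 < x) :
    Summable fun n : ℕ => ((n : ℝ) + x) ^ (-s) := by
  refine ((Real.summable_one_div_nat_add_rpow x s).2 hs).congr fun n => ?_
  rw [abs_of_pos (by positivity), one_div, Real.rpow_neg (by positivity)]

lemma hurwitzZetaSum_nonneg (hx : 0 ≤ x) : 0 ≤ hurwitzZetaSum s x :=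
  tsum_nonneg fun _ => rpow_nonneg (by positivity) _

lemma rpow_neg_le_hurwitzZetaSum (hs : 1 < s) (hx : 0 < x) : x ^ (-s) ≤ hurwitzZetaSum s x := by
  simpa [hurwitzZetaSum] using (summable_nat_add_rpow_neg hs hx).le_tsum 0
    fun _ _ => rpow_nonneg (by positivity) _

lemma hurwitzZetaSum_le_rpow_neg_add (hs : 1 < s) (hx : 0 < x) :
    hurwitzZetaSum s x ≤ x ^ (-s) + hurwitzZetaSum s 1 := by
  rw [hurwitzZetaSum, (summable_nat_add_rpow_neg hs hx).tsum_eq_zero_add, Nat.cast_zero, zero_add]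
  gcongr
  refine Summable.tsum_le_tsum (fun n => ?_) ?_ (summable_nat_add_rpow_neg hs one_pos)
  · push_cast
    exact rpow_le_rpow_of_nonpos (by positivity) (by linarith) (by linarith)
  · exact (summable_nat_add_iff 1).2 (summable_nat_add_rpow_neg hs hx)

lemma antitoneOn_hurwitzZetaSum (hs : 1 < s) : AntitoneOn (hurwitzZetaSum s) (Ioi 0) :=
  fun x hx y hy hxy => Summable.tsum_le_tsum
    (fun _ => rpow_le_rpow_of_nonpos (by positivity [mem_Ioi.1 hx]) (by linarith) (by linarith))
    (summable_nat_add_rpow_neg hs hy) (summable_nat_add_rpow_neg hs hx)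

end HurwitzZetaSum

lemma mul_one_sub_le_sin_pi_mul {t : ℝ} (h₀ : 0 ≤ t) (h₁ : t ≤ 1) :
    t * (1 - t) ≤ Real.sin (π * t) := by
  have jordan : ∀ u : ℝ, 0 ≤ u → u ≤ 1 / 2 → 2 * u ≤ Real.sin (π * u) := fun u hu hu' => by
    have := Real.mul_le_sin (x := π * u) (by positivity) (by nlinarith [pi_pos])
    rwa [← mul_assoc, div_mul_cancel₀ _ pi_ne_zero] at this
  rcases le_total t (1 / 2) with ht | ht
  · nlinarith [jordan t h₀ ht]
  · have := jordan (1 - t) (by linarith) (by linarith)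
    rw [mul_one_sub π t, Real.sin_pi_sub] at this
    nlinarith

lemma neg_riemannZeta_one_sub_div {s : ℂ} (hs : 1 < s.re) :
    -riemannZeta (1 - s) / (2 * riemannZeta s) = -(2 * π) ^ (-s) * Gamma s * cos (π * s / 2) := by
  have hs_nat (n : ℕ) : s ≠ -n := fun h => by
    have := congrArg re h
    simp only [neg_re, natCast_re] at this
    linarith [n.cast_nonneg (α := ℝ)]
  have hs_one : s ≠ 1 := fun h => by simp [h] at hs
  rw [riemannZeta_one_sub hs_nat hs_one]
  field_simp [riemannZeta_ne_zero_of_one_lt_re hs]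

lemma neg_riemannZeta_one_sub_div_ofReal {s : ℝ} (hs : 1 < s) :
    -riemannZeta (1 - s) / (2 * riemannZeta s) =
      ((-(2 * π) ^ (-s) * Real.Gamma s * Real.cos (π * s / 2) : ℝ) : ℂ) := by
  rw [neg_riemannZeta_one_sub_div (by simpa using hs)]
  push_cast
  rw [ofReal_cpow (by positivity), Gamma_ofReal]
  push_cast
  ring_nf

lemma pos_of_ofReal_eq_neg_riemannZeta_one_sub_div {C s : ℝ} (hs₁ : 1 < s) (hs₃ : s < 3)
    (hC : (C : ℂ) = -riemannZeta (1 - s) / (2 * riemannZeta s)) : 0 < C := by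
  rw [neg_riemannZeta_one_sub_div_ofReal hs₁, ofReal_inj] at hC
  have hcos : Real.cos (π * s / 2) < 0 :=
    Real.cos_neg_of_pi_div_two_lt_of_lt (by nlinarith [pi_pos]) (by nlinarith [pi_pos])
  have hGamma : 0 < Real.Gamma s := Real.Gamma_pos_of_pos (by linarith)
  have hpow : 0 < (2 * π) ^ (-s) := rpow_pos_of_pos (by positivity) _
  rw [hC, neg_mul, neg_mul, neg_pos]
  exact mul_neg_of_pos_of_neg (mul_pos hpow hGamma) hcos

lemma intervalIntegrable_log_mul_one_sub :
    IntervalIntegrable (fun t => Real.log t + Real.log (1 - t)) volume 0 1 := by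
  have hlog_one_sub : IntervalIntegrable (fun t => Real.log (1 - t)) volume 0 1 := by
    simpa using (intervalIntegral.intervalIntegrable_log' (a := 0) (b := 1)).comp_sub_left 1 |>.symm
  exact intervalIntegral.intervalIntegrable_log'.add hlog_one_sub

lemma log_mul_rpow_mul_one_sub {a t : ℝ} (p : ℝ) (ha : 0 < a) (ht : t ∈ Ioo 0 1) :
    Real.log (a * (t * (1 - t)) ^ p) = Real.log a + p * (Real.log t + Real.log (1 - t)) := by
  have h₀ : 0 < t := ht.1
  have h₁ : 0 < 1 - t := sub_pos.2 ht.2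
  rw [Real.log_mul ha.ne' (rpow_pos_of_pos (by positivity) _).ne', Real.log_rpow (by positivity),
    Real.log_mul h₀.ne' h₁.ne']

lemma intervalIntegrable_log_of_rpow_le_of_le_rpow {f : ℝ → ℝ} {a b p q : ℝ} (ha : 0 < a)
    (hf : AEMeasurable f (volume.restrict (Ioo 0 1)))
    (hlow : ∀ t ∈ Ioo 0 1, a * (t * (1 - t)) ^ p ≤ f t)
    (hup : ∀ t ∈ Ioo 0 1, f t ≤ b * (t * (1 - t)) ^ q) :
    IntervalIntegrable (fun t => Real.log (f t)) volume 0 1 := by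
  have hℓ := intervalIntegrable_log_mul_one_sub
  rw [intervalIntegrable_iff_integrableOn_Ioo_of_le zero_le_one] at hℓ ⊢
  refine integrable_of_le_of_le (g₁ := fun t => Real.log a + p * (Real.log t + Real.log (1 - t)))
    (g₂ := fun t => Real.log b + q * (Real.log t + Real.log (1 - t)))
    (measurable_log.comp_aemeasurable hf).aestronglyMeasurable ?_ ?_
    ((integrable_const _).add (hℓ.const_mul p)) ((integrable_const _).add (hℓ.const_mul q))
    <;> refine (ae_restrict_iff' measurableSet_Ioo).2 (ae_of_all _ fun t ht => ?_) <;> dsimp only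
  all_goals
    have hpow (r : ℝ) : 0 < (t * (1 - t)) ^ r := rpow_pos_of_pos (by nlinarith [ht.1, ht.2]) r
    have hft : 0 < f t := (mul_pos ha (hpow p)).trans_le (hlow t ht)
  · rw [← log_mul_rpow_mul_one_sub p ha ht]
    exact Real.log_le_log (mul_pos ha (hpow p)) (hlow t ht)
  · have hb : 0 < b := pos_of_mul_pos_left (hft.trans_le (hup t ht)) (hpow q).le
    rw [← log_mul_rpow_mul_one_sub q hb ht]
    exact Real.log_le_log hft (hup t ht)

noncomputable def fgnDensity (C s t : ℝ) : ℝ :=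
  4 * C * Real.sin (π * t) ^ 2 * (hurwitzZetaSum s t + hurwitzZetaSum s (1 - t))

section FgnDensity

variable {C s t : ℝ}

lemma one_le_hurwitzZetaSum_add (hs : 1 < s) (ht : t ∈ Ioo 0 1) :
    1 ≤ hurwitzZetaSum s t + hurwitzZetaSum s (1 - t) := by
  have h₁ : 1 ≤ t ^ (-s) :=
    one_le_rpow_of_pos_of_le_one_of_nonpos ht.1 ht.2.le (by linarith)
  linarith [rpow_neg_le_hurwitzZetaSum hs ht.1, hurwitzZetaSum_nonneg (s := s) (sub_pos.2 ht.2).le]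

lemma hurwitzZetaSum_add_le_mul_rpow (hs : 1 < s) (ht : t ∈ Ioo 0 1) :
    hurwitzZetaSum s t + hurwitzZetaSum s (1 - t) ≤
      (2 + 2 * hurwitzZetaSum s 1) * (t * (1 - t)) ^ (-s) := by
  obtain ⟨h₀, h₁⟩ := ht
  have hprod : 0 < t * (1 - t) := by nlinarith
  have hle_t : t ^ (-s) ≤ (t * (1 - t)) ^ (-s) :=
    rpow_le_rpow_of_nonpos hprod (by nlinarith) (by linarith)
  have hle_one_sub : (1 - t) ^ (-s) ≤ (t * (1 - t)) ^ (-s) :=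
    rpow_le_rpow_of_nonpos hprod (by nlinarith) (by linarith)
  have hone_le : 1 ≤ (t * (1 - t)) ^ (-s) :=
    one_le_rpow_of_pos_of_le_one_of_nonpos hprod (by nlinarith) (by linarith)
  have hζ₁ : 0 ≤ hurwitzZetaSum s 1 := hurwitzZetaSum_nonneg zero_le_one
  nlinarith [hurwitzZetaSum_le_rpow_neg_add hs h₀,
    hurwitzZetaSum_le_rpow_neg_add hs (sub_pos.2 h₁)]

lemma mul_rpow_le_fgnDensity (hC : 0 ≤ C) (hs : 1 < s) (ht : t ∈ Ioo 0 1) :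
    4 * C * (t * (1 - t)) ^ (2 : ℝ) ≤ fgnDensity C s t := by
  have hsin : t * (1 - t) ≤ Real.sin (π * t) :=
    mul_one_sub_le_sin_pi_mul ht.1.le ht.2.le
  have hprod : 0 ≤ t * (1 - t) := mul_nonneg ht.1.le (sub_pos.2 ht.2).le
  calc 4 * C * (t * (1 - t)) ^ (2 : ℝ)
      ≤ 4 * C * Real.sin (π * t) ^ 2 * 1 := by
        rw [rpow_two, mul_one]
        gcongr
    _ ≤ fgnDensity C s t := by
        unfold fgnDensity
        gcongr
        exact one_le_hurwitzZetaSum_add hs ht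

lemma fgnDensity_le_mul_rpow (hC : 0 ≤ C) (hs : 1 < s) (ht : t ∈ Ioo 0 1) :
    fgnDensity C s t ≤ 4 * C * (2 + 2 * hurwitzZetaSum s 1) * (t * (1 - t)) ^ (-s) := by
  have hZ : 0 ≤ hurwitzZetaSum s t + hurwitzZetaSum s (1 - t) :=
    zero_le_one.trans (one_le_hurwitzZetaSum_add hs ht)
  calc fgnDensity C s t
      ≤ 4 * C * 1 * (hurwitzZetaSum s t + hurwitzZetaSum s (1 - t)) := by
        unfold fgnDensity
        gcongr
        exact Real.sin_sq_le_one _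
    _ ≤ 4 * C * (2 + 2 * hurwitzZetaSum s 1) * (t * (1 - t)) ^ (-s) := by
        rw [mul_one, mul_assoc (4 * C)]
        exact mul_le_mul_of_nonneg_left (hurwitzZetaSum_add_le_mul_rpow hs ht) (by positivity)

lemma fgnDensity_pos (hC : 0 < C) (hs : 1 < s) (ht : t ∈ Ioo 0 1) : 0 < fgnDensity C s t := by
  have hprod : 0 < t * (1 - t) := mul_pos ht.1 (sub_pos.2 ht.2)
  exact lt_of_lt_of_le (by positivity) (mul_rpow_le_fgnDensity hC.le hs ht)

lemma aemeasurable_fgnDensity (hs : 1 < s) :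
    AEMeasurable (fgnDensity C s) (volume.restrict (Ioo 0 1)) := by
  have hζ_left : AEMeasurable (fun t => hurwitzZetaSum s t) (volume.restrict (Ioo 0 1)) :=
    aemeasurable_restrict_of_antitoneOn measurableSet_Ioo
      ((antitoneOn_hurwitzZetaSum hs).mono fun _ hx => hx.1)
  have hζ_right : AEMeasurable (fun t => hurwitzZetaSum s (1 - t))
      (volume.restrict (Ioo 0 1)) :=
    aemeasurable_restrict_of_monotoneOn measurableSet_Ioo fun x hx y hy hxy =>
      antitoneOn_hurwitzZetaSum hs (sub_pos.2 hy.2) (sub_pos.2 hx.2) (by linarith)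
  exact (by fun_prop : Continuous fun t => 4 * C * Real.sin (π * t) ^ 2).aemeasurable.mul
    (hζ_left.add hζ_right)

end FgnDensity

/-- Szegő condition for fractional Gaussian noise: for every H ∈ (0,1) the
spectral density `φ_H(t) = 4 C(H) sin²(πt) (ζ(2H+1, t) + ζ(2H+1, 1−t))`, with
`C(H) = −ζ(−2H)/(2ζ(1+2H))`, is strictly positive on (0,1) and `∫₀¹ |log φ_H| < ∞`;
in particular the Szegő function of `φ_H` is well defined. -/
theorem fgn_szego_condition (H : ℝ) (hH : H ∈ Set.Ioo (0:ℝ) 1)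
    (C : ℝ) (hC : (C : ℂ) = -riemannZeta (-(2 * (H : ℂ))) / (2 * riemannZeta (1 + 2 * (H : ℂ))))
    (φH : ℝ → ℝ)
    (hφH : ∀ t : ℝ, φH t = 4 * C * Real.sin (Real.pi * t) ^ 2 *
      (hurwitzZetaSum (2 * H + 1) t + hurwitzZetaSum (2 * H + 1) (1 - t))) :
    (∀ t ∈ Set.Ioo (0:ℝ) 1, 0 < φH t) ∧
    IntervalIntegrable (fun t => |Real.log (φH t)|) volume 0 1 ∧
    IntervalIntegrable (fun t => Real.log (φH t)) volume 0 1 := by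
  obtain ⟨hH₀, hH₁⟩ := hH
  have hs : 1 < 2 * H + 1 := by linarith
  have hCpos : 0 < C := by
    refine pos_of_ofReal_eq_neg_riemannZeta_one_sub_div hs (by linarith) ?_
    rw [hC]
    push_cast
    ring_nf
  obtain rfl : φH = fgnDensity C (2 * H + 1) := funext hφH
  have hlog := intervalIntegrable_log_of_rpow_le_of_le_rpow (by positivity)
    (aemeasurable_fgnDensity hs) (fun t ht => mul_rpow_le_fgnDensity hCpos.le hs ht)
    (fun t ht => fgnDensity_le_mul_rpow hCpos.le hs ht)
  exact ⟨fun t ht => fgnDensity_pos hCpos hs ht, hlog.abs, hlog⟩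
end
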